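/- arXiv:2505.19704 — 6 statements merged into one kernel-verified Lean document; each statement's English description precedes it below -/
import Mathlib

section
/- Lower a priori bound for the Tzitzéica equation: let u : V → ℝ satisfy −Δu(x) + h₁(x)·exp(A·u(x)) + h₂(x)·exp(−B·u(x)) = 0 for all x ∈ V, where h₁(x) > 0, h₂(x) < 0 for all x, and A, B > 0. Then for every x ∈ V, u(x) ≥ (1/(A+B))·log( (−max_V h₂) / (max_V h₁) ). -/
open Finset Real

noncomputable def graphLap {V : Type*} [Fintype V] (μ : V → ℝ) (w : V → V → ℝ)
    (u : V → ℝ) (x : V) : ℝ :=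
  (1 / μ x) * ∑ y, w x y * (u y - u x)

noncomputable def gradSq {V : Type*} [Fintype V] (μ : V → ℝ) (w : V → V → ℝ)
    (u : V → ℝ) (x : V) : ℝ :=
  (1 / (2 * μ x)) * ∑ y, w x y * (u y - u x) ^ 2

def GraphConnected {V : Type*} (w : V → V → ℝ) : Prop :=
  ∀ x y : V, Relation.ReflTransGen (fun a b => 0 < w a b) x y

theorem tzitzeica_lower_bound {V : Type*} [Fintype V] [Nonempty V]
    (μ : V → ℝ) (w : V → V → ℝ)
    (hμ : ∀ x, 0 < μ x) (hsym : ∀ x y, w x y = w y x) (hw : ∀ x y, 0 ≤ w x y)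
    (h₁ h₂ : V → ℝ) (hh₁ : ∀ x, 0 < h₁ x) (hh₂ : ∀ x, h₂ x < 0)
    (A B : ℝ) (hA : 0 < A) (hB : 0 < B)
    (u : V → ℝ)
    (hu : ∀ x, -graphLap μ w u x + h₁ x * Real.exp (A * u x)
        + h₂ x * Real.exp (-B * u x) = 0) :
    ∀ x, (1 / (A + B)) * Real.log
        ((-(Finset.univ.sup' Finset.univ_nonempty h₂)) /
          (Finset.univ.sup' Finset.univ_nonempty h₁)) ≤ u x := by

  obtain ⟨x₀, -, hmin⟩ := Finset.exists_min_image Finset.univ u Finset.univ_nonempty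
  set s₁ := Finset.univ.sup' Finset.univ_nonempty h₁ with hs₁def
  set s₂ := Finset.univ.sup' Finset.univ_nonempty h₂ with hs₂def
  have hs₁pos : 0 < s₁ := by
    obtain ⟨y, -, hy⟩ := Finset.exists_mem_eq_sup' Finset.univ_nonempty h₁
    rw [hs₁def, hy]; exact hh₁ y
  have hs₂neg : s₂ < 0 := by
    obtain ⟨y, -, hy⟩ := Finset.exists_mem_eq_sup' Finset.univ_nonempty h₂
    rw [hs₂def, hy]; exact hh₂ y
  have hlap : 0 ≤ graphLap μ w u x₀ := by
    unfold graphLap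
    have := hμ x₀
    apply mul_nonneg (by positivity)
    apply Finset.sum_nonneg
    intro y _
    exact mul_nonneg (hw x₀ y) (by linarith [hmin y (Finset.mem_univ y)])
  have heq := hu x₀
  have key : -(h₂ x₀) * Real.exp (-B * u x₀) ≤ h₁ x₀ * Real.exp (A * u x₀) := by
    nlinarith [heq, hlap]
  have hexp : -(h₂ x₀) ≤ h₁ x₀ * Real.exp ((A + B) * u x₀) := by
    have h3 : (0:ℝ) < Real.exp (B * u x₀) := Real.exp_pos _
    have hmul := mul_le_mul_of_nonneg_right key h3.le
    have e1 : Real.exp (-B * u x₀) * Real.exp (B * u x₀) = 1 := by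
      rw [← Real.exp_add]; ring_nf; simp
    have e2 : Real.exp (A * u x₀) * Real.exp (B * u x₀) = Real.exp ((A + B) * u x₀) := by
      rw [← Real.exp_add]; ring_nf
    rw [mul_assoc, e1, mul_one, mul_assoc, e2] at hmul
    exact hmul
  have hratio : (-s₂) / s₁ ≤ Real.exp ((A + B) * u x₀) := by
    rw [div_le_iff₀ hs₁pos]
    have h1 : h₁ x₀ ≤ s₁ := Finset.le_sup' h₁ (Finset.mem_univ x₀)
    have h2 : h₂ x₀ ≤ s₂ := Finset.le_sup' h₂ (Finset.mem_univ x₀)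
    have := Real.exp_pos ((A + B) * u x₀)
    nlinarith
  intro x
  have hAB : (0:ℝ) < A + B := by linarith
  have hlog : Real.log ((-s₂) / s₁) ≤ (A + B) * u x₀ := by
    calc Real.log ((-s₂) / s₁) ≤ Real.log (Real.exp ((A + B) * u x₀)) := by
          apply Real.log_le_log (div_pos (by linarith) hs₁pos) hratio
    _ = (A + B) * u x₀ := Real.log_exp _
  have hfin : (1 / (A + B)) * Real.log ((-s₂) / s₁) ≤ u x₀ := by
    rw [one_div, inv_mul_le_iff₀ hAB]
    linarith
  linarith [hmin x (Finset.mem_univ x)]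
end

section
/- Upper a priori bound for the Tzitzéica equation: let u : V → ℝ satisfy −Δu(x) + h₁(x)·exp(A·u(x)) + h₂(x)·exp(−B·u(x)) = 0 for all x, where h₁ > 0, h₂ < 0 pointwise and A, B > 0. Then for every x ∈ V, u(x) ≤ (1/(A+B))·log( (−min_V h₂) / (min_V h₁) ). -/
open Finset Real

theorem tzitzeica_upper_bound {V : Type*} [Fintype V] [Nonempty V]
    (μ : V → ℝ) (w : V → V → ℝ)
    (hμ : ∀ x, 0 < μ x) (hsym : ∀ x y, w x y = w y x) (hw : ∀ x y, 0 ≤ w x y)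
    (h₁ h₂ : V → ℝ) (hh₁ : ∀ x, 0 < h₁ x) (hh₂ : ∀ x, h₂ x < 0)
    (A B : ℝ) (hA : 0 < A) (hB : 0 < B)
    (u : V → ℝ)
    (hu : ∀ x, -graphLap μ w u x + h₁ x * Real.exp (A * u x)
        + h₂ x * Real.exp (-B * u x) = 0) :
    ∀ x, u x ≤ (1 / (A + B)) * Real.log
        ((-(Finset.univ.inf' Finset.univ_nonempty h₂)) /
          (Finset.univ.inf' Finset.univ_nonempty h₁)) := by
  obtain ⟨x₀, -, hmax⟩ := Finset.exists_max_image Finset.univ u Finset.univ_nonempty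
  set m1 := Finset.univ.inf' Finset.univ_nonempty h₁ with hm1
  set m2 := Finset.univ.inf' Finset.univ_nonempty h₂ with hm2
  have hm1pos : 0 < m1 := by
    obtain ⟨z, -, hz⟩ := Finset.exists_mem_eq_inf' Finset.univ_nonempty h₁
    rw [hm1, hz]; exact hh₁ z
  have hm2neg : m2 < 0 := by
    obtain ⟨z, -, hz⟩ := Finset.exists_mem_eq_inf' Finset.univ_nonempty h₂
    rw [hm2, hz]; exact hh₂ z
  have hlap : graphLap μ w u x₀ ≤ 0 := by
    unfold graphLap
    apply mul_nonpos_of_nonneg_of_nonpos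
    · exact div_nonneg one_pos.le (hμ x₀).le
    · apply Finset.sum_nonpos
      intro y _
      exact mul_nonpos_of_nonneg_of_nonpos (hw x₀ y)
        (sub_nonpos.mpr (hmax y (Finset.mem_univ y)))
  have key : h₁ x₀ * Real.exp ((A + B) * u x₀) ≤ -h₂ x₀ := by
    have h := hu x₀
    have h2 : h₁ x₀ * Real.exp (A * u x₀) + h₂ x₀ * Real.exp (-B * u x₀) ≤ 0 := by
      nlinarith [hlap]
    have hE : 0 < Real.exp (B * u x₀) := Real.exp_pos _
    have := mul_le_mul_of_nonneg_right h2 hE.le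
    rw [add_mul, mul_assoc, mul_assoc, ← Real.exp_add, ← Real.exp_add] at this
    have e1 : A * u x₀ + B * u x₀ = (A + B) * u x₀ := by ring
    have e2 : -B * u x₀ + B * u x₀ = 0 := by ring
    rw [e1, e2, Real.exp_zero, mul_one] at this
    linarith
  have hbound : Real.exp ((A + B) * u x₀) ≤ (-m2) / m1 := by
    rw [le_div_iff₀ hm1pos]
    have hm1le : m1 ≤ h₁ x₀ := Finset.inf'_le _ (Finset.mem_univ x₀)
    have hm2le : m2 ≤ h₂ x₀ := Finset.inf'_le _ (Finset.mem_univ x₀)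
    have hEpos : 0 < Real.exp ((A + B) * u x₀) := Real.exp_pos _
    nlinarith
  have hlog : (A + B) * u x₀ ≤ Real.log ((-m2) / m1) :=
    (Real.le_log_iff_exp_le (div_pos (by linarith) hm1pos)).mpr hbound
  intro x
  have hx : u x ≤ u x₀ := hmax x (Finset.mem_univ x)
  have hAB : 0 < A + B := by linarith
  have : u x₀ ≤ (1 / (A + B)) * Real.log ((-m2) / m1) := by
    rw [div_mul_eq_mul_div, le_div_iff₀ hAB, mul_comm] at *
    linarith
  linarith
end

section
/- Nonexistence for the Tzitzéica equation with positive coefficients: if h₁(x) > 0 and h₂(x) > 0 for all x ∈ V and A, B > 0, then there is no function u : V → ℝ satisfying −Δu(x) + h₁(x)·exp(A·u(x)) + h₂(x)·exp(−B·u(x)) = 0 for all x ∈ V. -/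
open Finset Real

/-
Summing the equation against `μ` kills the Laplacian term, since `∑ₓ μ x Δu(x) = 0` for any
symmetric weight, while the exponential terms are strictly positive at every vertex.
-/

theorem Finset.sum_sum_eq_zero_of_antisymm {ι M : Type*} [AddCommGroup M] [IsAddTorsionFree M]
    (s : Finset ι) (f : ι → ι → M) (hf : ∀ i j, f i j = -f j i) :
    ∑ i ∈ s, ∑ j ∈ s, f i j = 0 := by
  have h : ∑ i ∈ s, ∑ j ∈ s, f i j = -∑ i ∈ s, ∑ j ∈ s, f i j := by
    conv_lhs => rw [sum_comm]
    simp only [← sum_neg_distrib]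
    exact sum_congr rfl fun j _ => sum_congr rfl fun i _ => hf i j
  exact self_eq_neg.mp h

section GraphLaplacian

variable {V : Type*} [Fintype V] {μ : V → ℝ} {w : V → V → ℝ}

theorem sum_mul_graphLap_eq_zero (hμ : ∀ x, μ x ≠ 0) (hsym : ∀ x y, w x y = w y x)
    (u : V → ℝ) : ∑ x, μ x * graphLap μ w u x = 0 := by
  have hcancel : ∀ x, μ x * graphLap μ w u x = ∑ y, w x y * (u y - u x) := fun x => by
    rw [graphLap, ← mul_assoc, mul_one_div_cancel (hμ x), one_mul]
  simp only [hcancel]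
  exact sum_sum_eq_zero_of_antisymm _ _ fun x y => by rw [hsym]; ring

theorem not_forall_graphLap_pos [Nonempty V] (hμ : ∀ x, 0 < μ x)
    (hsym : ∀ x y, w x y = w y x) (u : V → ℝ) : ¬ ∀ x, 0 < graphLap μ w u x := fun hpos =>
  (sum_pos (fun x _ => mul_pos (hμ x) (hpos x)) univ_nonempty).ne'
    (sum_mul_graphLap_eq_zero (fun x => (hμ x).ne') hsym u)

end GraphLaplacian

theorem tzitzeica_nonexistence_general {V : Type*} [Fintype V] [Nonempty V]
    (μ : V → ℝ) (w : V → V → ℝ)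
    (hμ : ∀ x, 0 < μ x) (hsym : ∀ x y, w x y = w y x)
    (h₁ h₂ : V → ℝ) (hh₁ : ∀ x, 0 < h₁ x) (hh₂ : ∀ x, 0 < h₂ x)
    (A B : ℝ) :
    ¬ ∃ u : V → ℝ, ∀ x, -graphLap μ w u x + h₁ x * Real.exp (A * u x)
        + h₂ x * Real.exp (-B * u x) = 0 := by
  rintro ⟨u, hu⟩
  refine not_forall_graphLap_pos hμ hsym u fun x => ?_
  have hsource : 0 < h₁ x * exp (A * u x) + h₂ x * exp (-B * u x) := by
    have := hh₁ x; have := hh₂ x; positivity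
  linarith [hu x]

theorem tzitzeica_nonexistence {V : Type*} [Fintype V] [Nonempty V]
    (μ : V → ℝ) (w : V → V → ℝ)
    (hμ : ∀ x, 0 < μ x) (hsym : ∀ x y, w x y = w y x) (hw : ∀ x y, 0 ≤ w x y)
    (h₁ h₂ : V → ℝ) (hh₁ : ∀ x, 0 < h₁ x) (hh₂ : ∀ x, 0 < h₂ x)
    (A B : ℝ) (hA : 0 < A) (hB : 0 < B) :
    ¬ ∃ u : V → ℝ, ∀ x, -graphLap μ w u x + h₁ x * Real.exp (A * u x)
        + h₂ x * Real.exp (-B * u x) = 0 :=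
  tzitzeica_nonexistence_general μ w hμ hsym h₁ h₂ hh₁ hh₂ A B
end

section
/- Upper a priori bound for the generalized Tzitzéica equation: suppose u : V → ℝ satisfies −Δu(x) + h₁(x)·e^{Au(x)}(e^{Au(x)} − 1) + h₂(x)·e^{−Bu(x)}(e^{−Bu(x)} − 1) = 0 for all x, with h₁ > 0, h₂ > 0 pointwise and A, B > 0. Then for all x ∈ V, u(x) ≤ (1/A)·log( 1/2 + sqrt( (max_V h₂)/(4·min_V h₁) + 1/4 ) ). -/
open Finset Real

theorem gen_tzitzeica_upper_bound {V : Type*} [Fintype V] [Nonempty V]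
    (μ : V → ℝ) (w : V → V → ℝ)
    (hμ : ∀ x, 0 < μ x) (hsym : ∀ x y, w x y = w y x) (hw : ∀ x y, 0 ≤ w x y)
    (h₁ h₂ : V → ℝ) (hh₁ : ∀ x, 0 < h₁ x) (hh₂ : ∀ x, 0 < h₂ x)
    (A B : ℝ) (hA : 0 < A) (hB : 0 < B)
    (u : V → ℝ)
    (hu : ∀ x, -graphLap μ w u x
        + h₁ x * Real.exp (A * u x) * (Real.exp (A * u x) - 1)
        + h₂ x * Real.exp (-B * u x) * (Real.exp (-B * u x) - 1) = 0) :
    ∀ x, u x ≤ (1 / A) * Real.log (1 / 2 +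
      Real.sqrt ((Finset.univ.sup' Finset.univ_nonempty h₂) /
        (4 * Finset.univ.inf' Finset.univ_nonempty h₁) + 1 / 4)) := by
  obtain ⟨x₀, hmax⟩ := Finite.exists_max u
  set m₁ := Finset.univ.inf' Finset.univ_nonempty h₁ with hm₁
  set H₂ := Finset.univ.sup' Finset.univ_nonempty h₂ with hH₂
  have hm₁pos : 0 < m₁ := by
    obtain ⟨z, _, hz⟩ := Finset.exists_mem_eq_inf' Finset.univ_nonempty h₁
    rw [hm₁, hz]; exact hh₁ z
  have hm₁le : m₁ ≤ h₁ x₀ := Finset.inf'_le _ (Finset.mem_univ x₀)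
  have hH₂ge : h₂ x₀ ≤ H₂ := Finset.le_sup' _ (Finset.mem_univ x₀)
  have hLap : graphLap μ w u x₀ ≤ 0 := by
    unfold graphLap
    apply mul_nonpos_of_nonneg_of_nonpos
    · exact one_div_nonneg.mpr (hμ x₀).le
    · apply Finset.sum_nonpos
      intro y _
      exact mul_nonpos_of_nonneg_of_nonpos (hw x₀ y) (by linarith [hmax y])
  set s := Real.exp (A * u x₀) with hs
  set f := Real.exp (-B * u x₀) with hf
  have hspos : 0 < s := Real.exp_pos _
  have hfpos : 0 < f := Real.exp_pos _
  have key : h₁ x₀ * s * (s - 1) + h₂ x₀ * f * (f - 1) ≤ 0 := by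
    have := hu x₀; linarith
  have hquarter : h₂ x₀ * f * (f - 1) ≥ -(h₂ x₀ / 4) := by
    nlinarith [hh₂ x₀, sq_nonneg (f - 1/2)]
  have h1 : m₁ * (s * (s - 1)) ≤ H₂ / 4 := by
    rcases le_or_gt 0 (s * (s - 1)) with h | h
    · nlinarith [hh₁ x₀]
    · have h5 : m₁ * (s * (s - 1)) < 0 := mul_neg_of_pos_of_neg hm₁pos h
      linarith [hh₂ x₀]
  have hC : s * (s - 1) ≤ H₂ / (4 * m₁) := by
    rw [le_div_iff₀ (by positivity)]
    nlinarith
  set C := H₂ / (4 * m₁) with hCdef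
  have hCnn : 0 ≤ C + 1/4 := by
    have : 0 < H₂ := lt_of_lt_of_le (hh₂ x₀) hH₂ge
    have : 0 ≤ C := by positivity
    linarith
  have hsqrt := Real.sq_sqrt hCnn
  have hsqnn := Real.sqrt_nonneg (C + 1/4)
  set R := 1/2 + Real.sqrt (C + 1/4) with hR
  have hRpos : 0 < R := by rw [hR]; linarith
  have hsR : s ≤ R := by
    by_contra hgt
    push_neg at hgt
    have h4 : Real.sqrt (C + 1/4) < s - 1/2 := by rw [hR] at hgt; linarith
    have h5 := pow_lt_pow_left₀ h4 hsqnn (two_ne_zero)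
    nlinarith [hC, hsqrt, h5]
  intro x
  have h3 : A * u x₀ ≤ Real.log R := by
    rw [Real.le_log_iff_exp_le hRpos]; exact hsR
  calc u x ≤ u x₀ := hmax x
    _ ≤ (1/A) * Real.log R := by
        rw [one_div, inv_mul_eq_div]
        exact (le_div_iff₀ hA).mpr (by linarith [h3])
    _ = _ := rfl
end

section
/- Elliptic estimate on a connected finite graph: there exists a constant C > 0, depending only on the graph (its weights, measure, diameter and λ₁), such that for every u : V → ℝ, max_V u − min_V u ≤ C·‖Δu‖_∞, where ‖Δu‖_∞ = max_x |Δu(x)|. -/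
open Finset Real

/-! A harmonic function on a connected graph is constant (maximum principle), so the graph
Laplacian is injective on the functions vanishing at a base point. On this finite-dimensional
space it is then bounded below, `‖v‖ ≤ K ‖Δv‖`, and the oscillation of `u` is at most twice the
sup norm of `u - u x₀`, which lies in that space and has the same Laplacian. -/

theorem LinearMap.exists_norm_le_mul_norm_of_disjoint_ker {𝕜 E F : Type*}
    [NontriviallyNormedField 𝕜] [CompleteSpace 𝕜] [NormedAddCommGroup E] [NormedSpace 𝕜 E]
    [FiniteDimensional 𝕜 E] [NormedAddCommGroup F] [NormedSpace 𝕜 F]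
    (f : E →ₗ[𝕜] F) {p : Submodule 𝕜 E} (hp : Disjoint p (LinearMap.ker f)) :
    ∃ K : ℝ, 0 < K ∧ ∀ v ∈ p, ‖v‖ ≤ K * ‖f v‖ := by
  have hker : LinearMap.ker (f ∘ₗ p.subtype) = ⊥ :=
    LinearMap.ker_eq_bot'.mpr fun v hv => Subtype.ext (Submodule.disjoint_def.mp hp v v.2 hv)
  obtain ⟨K, hK, hanti⟩ := (f ∘ₗ p.subtype).exists_antilipschitzWith hker
  exact ⟨K, hK, fun v hv => ZeroHomClass.bound_of_antilipschitz _ hanti ⟨v, hv⟩⟩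

theorem sup'_sub_inf'_le_two_mul_norm_sub_const {V : Type*} [Fintype V] [Nonempty V]
    (u : V → ℝ) (c : ℝ) :
    univ.sup' univ_nonempty u - univ.inf' univ_nonempty u ≤ 2 * ‖u - fun _ => c‖ := by
  obtain ⟨p, -, hp⟩ := exists_mem_eq_sup' univ_nonempty u
  obtain ⟨q, -, hq⟩ := exists_mem_eq_inf' univ_nonempty u
  have hp' := abs_le.mp ((norm_le_pi_norm (u - fun _ => c) p))
  have hq' := abs_le.mp ((norm_le_pi_norm (u - fun _ => c) q))
  simp only [Pi.sub_apply] at hp' hq'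
  rw [hp, hq]
  linarith [hp'.2, hq'.1]

theorem norm_le_sup'_abs {V : Type*} [Fintype V] [Nonempty V] (f : V → ℝ) :
    ‖f‖ ≤ univ.sup' univ_nonempty fun x => |f x| := by
  obtain ⟨x₀⟩ := ‹Nonempty V›
  refine (pi_norm_le_iff_of_nonneg ((abs_nonneg (f x₀)).trans ?_)).mpr fun x => ?_
  · exact le_sup' (fun x => |f x|) (mem_univ x₀)
  · exact le_sup' (fun x => |f x|) (mem_univ x)

section GraphLaplacian

variable {V : Type*} [Fintype V] (μ : V → ℝ) (w : V → V → ℝ)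

noncomputable def graphLapₗ : (V → ℝ) →ₗ[ℝ] V → ℝ where
  toFun := graphLap μ w
  map_add' u v := by
    ext x
    simp only [graphLap, Pi.add_apply, ← mul_add, ← sum_add_distrib]
    congr 1
    exact sum_congr rfl fun y _ => by ring
  map_smul' c u := by
    ext x
    simp only [graphLap, Pi.smul_apply, smul_eq_mul, RingHom.id_apply, mul_sum]
    exact sum_congr rfl fun y _ => by ring

@[simp]
theorem graphLapₗ_apply (u : V → ℝ) : graphLapₗ μ w u = graphLap μ w u := rfl

@[simp]
theorem graphLap_const (c : ℝ) : graphLap μ w (fun _ => c) = 0 := by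
  ext x
  simp [graphLap]

variable {μ w}

theorem apply_eq_of_isMaxOn_of_graphLap_nonneg {u : V → ℝ} {b c : V} (hμb : 0 < μ b)
    (hw : ∀ y, 0 ≤ w b y) (hmax : IsMaxOn u Set.univ b) (hΔ : 0 ≤ graphLap μ w u b)
    (hbc : 0 < w b c) : u c = u b := by
  have hterm : ∀ y ∈ univ, w b y * (u y - u b) ≤ 0 := fun y _ =>
    mul_nonpos_of_nonneg_of_nonpos (hw y) (sub_nonpos.mpr (hmax (Set.mem_univ y)))
  have hsum : ∑ y, w b y * (u y - u b) = 0 :=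
    le_antisymm (sum_nonpos hterm) (nonneg_of_mul_nonneg_right hΔ (by positivity))
  have hc := (sum_eq_zero_iff_of_nonpos hterm).mp hsum c (mem_univ c)
  rcases mul_eq_zero.mp hc with h | h
  · exact absurd h hbc.ne'
  · linarith

theorem eq_of_forall_graphLap_nonneg (hμ : ∀ x, 0 < μ x) (hw : ∀ x y, 0 ≤ w x y)
    (hconn : GraphConnected w) {u : V → ℝ} (hΔ : ∀ x, 0 ≤ graphLap μ w u x) (x y : V) :
    u x = u y := by
  have : Nonempty V := ⟨x⟩
  obtain ⟨a, ha⟩ := Finite.exists_max u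
  have hmax : IsMaxOn u Set.univ a := fun z _ => ha z
  have hconst : ∀ z, u z = u a := by
    intro z
    induction hconn a z with
    | refl => rfl
    | tail _ hbc ih =>
      have hmax' : IsMaxOn u Set.univ _ := fun z hz => ih ▸ hmax hz
      rw [apply_eq_of_isMaxOn_of_graphLap_nonneg (hμ _) (hw _) hmax' (hΔ _) hbc, ih]
  rw [hconst x, hconst y]

theorem disjoint_ker_proj_ker_graphLapₗ (hμ : ∀ x, 0 < μ x)
    (hw : ∀ x y, 0 ≤ w x y) (hconn : GraphConnected w) (x₀ : V) :
    Disjoint (LinearMap.ker (LinearMap.proj x₀ : (V → ℝ) →ₗ[ℝ] ℝ))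
      (LinearMap.ker (graphLapₗ μ w)) := by
  refine Submodule.disjoint_def.mpr fun v hv₀ hΔ => funext fun x => ?_
  have hΔ' : graphLap μ w v = 0 := hΔ
  have hconst := eq_of_forall_graphLap_nonneg hμ hw hconn (fun x => (congrFun hΔ' x).ge) x x₀
  rw [hconst]
  exact hv₀

end GraphLaplacian

theorem elliptic_estimate_general {V : Type*} [Fintype V] [Nonempty V]
    (μ : V → ℝ) (w : V → V → ℝ)
    (hμ : ∀ x, 0 < μ x) (hw : ∀ x y, 0 ≤ w x y)
    (hconn : GraphConnected w) :
    ∃ C : ℝ, 0 < C ∧ ∀ u : V → ℝ,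
      Finset.univ.sup' Finset.univ_nonempty u
        - Finset.univ.inf' Finset.univ_nonempty u
      ≤ C * Finset.univ.sup' Finset.univ_nonempty
          (fun x => |graphLap μ w u x|) := by
  obtain ⟨x₀⟩ := ‹Nonempty V›
  obtain ⟨K, hK, hbound⟩ := (graphLapₗ μ w).exists_norm_le_mul_norm_of_disjoint_ker
    (disjoint_ker_proj_ker_graphLapₗ hμ hw hconn x₀)
  refine ⟨2 * K, by positivity, fun u => ?_⟩
  set v : V → ℝ := u - fun _ => u x₀
  have hv : v ∈ LinearMap.ker (LinearMap.proj x₀ : (V → ℝ) →ₗ[ℝ] ℝ) := by simp [v]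
  have hΔv : graphLapₗ μ w v = graphLap μ w u := by
    rw [map_sub]
    simp
  calc _ ≤ 2 * ‖v‖ := sup'_sub_inf'_le_two_mul_norm_sub_const u (u x₀)
    _ ≤ 2 * (K * ‖graphLap μ w u‖) := by grw [hbound v hv, hΔv]
    _ ≤ 2 * K * univ.sup' univ_nonempty fun x => |graphLap μ w u x| := by
      grw [mul_assoc, norm_le_sup'_abs]

theorem elliptic_estimate {V : Type*} [Fintype V] [Nonempty V]
    (μ : V → ℝ) (w : V → V → ℝ)
    (hμ : ∀ x, 0 < μ x) (hsym : ∀ x y, w x y = w y x) (hw : ∀ x y, 0 ≤ w x y)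
    (hconn : GraphConnected w) :
    ∃ C : ℝ, 0 < C ∧ ∀ u : V → ℝ,
      Finset.univ.sup' Finset.univ_nonempty u
        - Finset.univ.inf' Finset.univ_nonempty u
      ≤ C * Finset.univ.sup' Finset.univ_nonempty
          (fun x => |graphLap μ w u x|) :=
  elliptic_estimate_general μ w hμ hw hconn
end

section
/- Uniqueness of the zero solution for the perturbed equation: there exists ε₀ > 0 (depending only on the graph and on A, B > 0) such that for every ε with 0 < ε < ε₀, the only function u : V → ℝ satisfying −Δu(x) + ε·e^{Au(x)} − ε·e^{−Bu(x)} = 0 for all x ∈ V is u ≡ 0. -/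
open Finset Real

theorem perturbed_uniqueness {V : Type*} [Fintype V] [Nonempty V]
    (μ : V → ℝ) (w : V → V → ℝ)
    (hμ : ∀ x, 0 < μ x) (hsym : ∀ x y, w x y = w y x) (hw : ∀ x y, 0 ≤ w x y)
    (hconn : GraphConnected w)
    (A B : ℝ) (hA : 0 < A) (hB : 0 < B) :
    ∃ ε₀ : ℝ, 0 < ε₀ ∧ ∀ ε : ℝ, 0 < ε → ε < ε₀ →
      ∀ u : V → ℝ,
        (∀ x, -graphLap μ w u x + ε * Real.exp (A * u x)
            - ε * Real.exp (-B * u x) = 0) →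
        ∀ x, u x = 0 := by
  refine ⟨1, one_pos, fun ε hε _ u heq x => ?_⟩
  obtain ⟨xM, hxM⟩ := Finite.exists_max u
  obtain ⟨xm, hxm⟩ := Finite.exists_min u
  -- Laplacian at max point is ≤ 0
  have hLM : graphLap μ w u xM ≤ 0 := by
    unfold graphLap
    apply mul_nonpos_of_nonneg_of_nonpos
    · have := hμ xM; positivity
    · apply Finset.sum_nonpos
      intro y _
      exact mul_nonpos_of_nonneg_of_nonpos (hw _ _) (by linarith [hxM y])
  have hLm : 0 ≤ graphLap μ w u xm := by
    unfold graphLap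
    apply mul_nonneg
    · have := hμ xm; positivity
    · apply Finset.sum_nonneg
      intro y _
      exact mul_nonneg (hw _ _) (by linarith [hxm y])
  -- From the equation at xM: ε*(exp(A M) - exp(-B M)) = Δu(xM) ≤ 0
  have hM : u xM ≤ 0 := by
    have h1 := heq xM
    have h2 : Real.exp (A * u xM) ≤ Real.exp (-B * u xM) := by nlinarith
    have h3 : A * u xM ≤ -B * u xM := Real.exp_le_exp.mp h2
    nlinarith
  have hm : 0 ≤ u xm := by
    have h1 := heq xm
    have h2 : Real.exp (-B * u xm) ≤ Real.exp (A * u xm) := by nlinarith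
    have h3 : -B * u xm ≤ A * u xm := Real.exp_le_exp.mp h2
    nlinarith
  have := hxM x
  have := hxm x
  linarith
end
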